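/- Let H be a finite-dimensional real Hilbert space and r ∈ ℕ. Let α, γ > 0, β > 1, c_F ≥ 0, and let F : ℝ × H → H be continuous and satisfy, for all t ≥ 0: ‖F(t,x)‖ ≤ α‖x‖^β whenever ‖x‖ ≥ c_F, and ‖F(t,x) − F(t,y)‖ ≤ γ·max(‖x‖,‖y‖)^{β−1}·‖x − y‖ whenever ‖x‖ ≥ c_F and ‖y‖ ≥ c_F. Fix w ∈ H with ‖w‖ > c_F, fix ρ with 0 < ρ < γ/α, set η = ρα/(γ − ρα), and assume η ≤ 1 − c_F/‖w‖. Let a ≥ 0, k = (1/(2γ^β))·ρ·(γ − ρα)^{β−1}·‖w‖^{1−β}, and κ = η‖w‖. Suppose U is an H-valued polynomial of degree at most r such that ‖U(t) − w‖ ≤ κ for all t ∈ [a, a+k] and ∫_a^{a+k} ⟨U'(t), V(t)⟩ dt + ⟨U(a) − w, V(a)⟩ = ∫_a^{a+k} ⟨F(t, U(t)), V(t)⟩ dt for every H-valued polynomial V of degree at most r. Then ‖U(a+k)‖ ≤ (1 + ρα·(ργ^β + (γ − ρα)^β)/(2·γ^β·(γ − ρα)))·‖w‖. -/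

import Mathlib

open MeasureTheory Set
open scoped RealInnerProductSpace

/-!
Test the dG equation with the constant function `V ≡ z := U (a + k)`. Since `U'` integrates
to `U (a + k) - U a`, this gives `⟪z - w, z⟫ = ∫ ⟪F t (U t), z⟫`. On the step the iterate stays
in the ball of radius `κ = η ‖w‖` around `w`, which keeps `‖U t‖ ≥ c_F`, so Lipschitz continuity
at `w` together with the growth bound at `w` bounds `‖F t (U t)‖` by
`M = γ ((1 + η) ‖w‖)^(β-1) κ + α ‖w‖^β`. Hence `‖z‖² ≤ (‖w‖ + M k) ‖z‖`, and the time step `k`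
is chosen so that `M k` is exactly the stated multiple of `‖w‖`.
-/

/-- `U : ℝ → X` is an `X`-valued polynomial of degree at most `r`. -/
def IsXPoly {X : Type*} [NormedAddCommGroup X] [NormedSpace ℝ X]
    (r : ℕ) (U : ℝ → X) : Prop :=
  ∃ c : ℕ → X, ∀ t : ℝ, U t = ∑ i ∈ Finset.range (r + 1), t ^ i • c i

section Polynomials

variable {X : Type*} [NormedAddCommGroup X] [NormedSpace ℝ X]

theorem isXPoly_const (r : ℕ) (z : X) : IsXPoly r (fun _ : ℝ => z) := by
  refine ⟨fun i => if i = 0 then z else 0, fun t => ?_⟩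
  rw [Finset.sum_eq_single 0]
  · simp
  · intro i _ hi; simp [hi]
  · simp

theorem IsXPoly.contDiff {r : ℕ} {U : ℝ → X} (hU : IsXPoly r U) {n : WithTop ℕ∞} :
    ContDiff ℝ n U := by
  obtain ⟨c, hc⟩ := hU
  rw [funext hc]
  fun_prop

end Polynomials

section InnerProduct

variable {H : Type*} [NormedAddCommGroup H] [InnerProductSpace ℝ H]

theorem integral_inner_deriv_eq {U : ℝ → H} (hU : ContDiff ℝ 1 U) (a b : ℝ) (z : H) :
    ∫ t in a..b, ⟪deriv U t, z⟫ = ⟪U b - U a, z⟫ := by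
  have hUd : Differentiable ℝ U := hU.differentiable one_ne_zero
  rw [inner_sub_left]
  have hcont : Continuous fun t => ⟪deriv U t, z⟫ :=
    (hU.continuous_deriv le_rfl).inner continuous_const
  refine intervalIntegral.integral_eq_sub_of_hasDerivAt (f := fun t => ⟪U t, z⟫)
    (fun t _ => ?_) (hcont.intervalIntegrable a b)
  simpa using (hUd t).hasDerivAt.inner ℝ (hasDerivAt_const t z)

theorem integral_inner_le_of_norm_le {g : ℝ → H} {a b M : ℝ} (hab : a ≤ b)
    (hg : ∀ t ∈ Icc a b, ‖g t‖ ≤ M) (z : H) :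
    ∫ t in a..b, ⟪g t, z⟫ ≤ M * ‖z‖ * (b - a) := by
  have hbound : ∀ t ∈ uIoc a b, ‖⟪g t, z⟫‖ ≤ M * ‖z‖ := by
    intro t ht
    rw [uIoc_of_le hab] at ht
    calc ‖⟪g t, z⟫‖ ≤ ‖g t‖ * ‖z‖ := norm_inner_le_norm _ _
      _ ≤ M * ‖z‖ := by gcongr; exact hg t (Ioc_subset_Icc_self ht)
  have h := intervalIntegral.norm_integral_le_of_norm_le_const hbound
  rw [abs_of_nonneg (sub_nonneg.mpr hab)] at h
  exact (le_abs_self _).trans h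

theorem norm_le_add_of_inner_sub_le {z w : H} {B : ℝ} (hB : 0 ≤ B)
    (h : ⟪z - w, z⟫ ≤ B * ‖z‖) : ‖z‖ ≤ ‖w‖ + B := by
  rcases (norm_nonneg z).eq_or_lt with hz | hz
  · rw [← hz]; positivity
  have hsq : ‖z‖ * ‖z‖ ≤ (‖w‖ + B) * ‖z‖ := by
    have hwz := real_inner_le_norm w z
    rw [inner_sub_left, real_inner_self_eq_norm_mul_norm] at h
    linarith
  exact le_of_mul_le_mul_right hsq hz

end InnerProduct

theorem norm_le_of_lipschitz_growth {E F : Type*} [SeminormedAddCommGroup E]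
    [SeminormedAddCommGroup F] {f : E → F} {x w : E} {α γ β κ : ℝ} (hγ : 0 ≤ γ) (hβ : 1 ≤ β)
    (hgrowth : ‖f w‖ ≤ α * ‖w‖ ^ β)
    (hLip : ‖f x - f w‖ ≤ γ * max ‖x‖ ‖w‖ ^ (β - 1) * ‖x - w‖) (hxw : ‖x - w‖ ≤ κ) :
    ‖f x‖ ≤ γ * (‖w‖ + κ) ^ (β - 1) * κ + α * ‖w‖ ^ β := by
  have hκ : 0 ≤ κ := (norm_nonneg _).trans hxw
  have hmax : max ‖x‖ ‖w‖ ≤ ‖w‖ + κ :=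
    max_le (by linarith [norm_le_norm_add_norm_sub' x w]) (by linarith)
  calc ‖f x‖ ≤ ‖f x - f w‖ + ‖f w‖ := norm_le_norm_sub_add _ _
    _ ≤ γ * max ‖x‖ ‖w‖ ^ (β - 1) * ‖x - w‖ + α * ‖w‖ ^ β := add_le_add hLip hgrowth
    _ ≤ γ * (‖w‖ + κ) ^ (β - 1) * κ + α * ‖w‖ ^ β := by
      gcongr

theorem growthBound_mul_timeStep_eq {α γ β ρ W : ℝ} (hγ : 0 < γ) (hA : 0 < γ - ρ * α)
    (hW : 0 < W) :
    (γ * (W + ρ * α / (γ - ρ * α) * W) ^ (β - 1) * (ρ * α / (γ - ρ * α) * W) + α * W ^ β) *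
      (1 / (2 * γ ^ β) * ρ * (γ - ρ * α) ^ (β - 1) * W ^ (1 - β)) =
    ρ * α * (ρ * γ ^ β + (γ - ρ * α) ^ β) / (2 * γ ^ β * (γ - ρ * α)) * W := by
  have hsum : W + ρ * α / (γ - ρ * α) * W = γ / (γ - ρ * α) * W := by
    field_simp; ring
  rw [hsum, Real.mul_rpow (by positivity) hW.le, Real.div_rpow hγ.le hA.le,
    Real.rpow_sub_one hγ.ne', Real.rpow_sub_one hA.ne', Real.rpow_sub_one hW.ne',
    Real.rpow_sub hW, Real.rpow_one]
  have := Real.rpow_pos_of_pos hγ β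
  have := Real.rpow_pos_of_pos hA β
  have := Real.rpow_pos_of_pos hW β
  field_simp

theorem dG_one_step_upper_growth_general
    {H : Type*} [NormedAddCommGroup H] [InnerProductSpace ℝ H]
    (r : ℕ) (α γ β c_F : ℝ)
    (hα : 0 < α) (hγ : 0 < γ) (hβ : 1 < β) (hcF : 0 ≤ c_F)
    (F : ℝ → H → H)
    (hgrowth : ∀ t : ℝ, 0 ≤ t → ∀ x : H, c_F ≤ ‖x‖ → ‖F t x‖ ≤ α * ‖x‖ ^ β)
    (hLip : ∀ t : ℝ, 0 ≤ t → ∀ x y : H, c_F ≤ ‖x‖ → c_F ≤ ‖y‖ →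
      ‖F t x - F t y‖ ≤ γ * max ‖x‖ ‖y‖ ^ (β - 1) * ‖x - y‖)
    (w : H) (hw : c_F < ‖w‖)
    (ρ : ℝ) (hρ0 : 0 < ρ) (hργ : ρ < γ / α)
    (η : ℝ) (hη : η = ρ * α / (γ - ρ * α)) (hη1 : η ≤ 1 - c_F / ‖w‖)
    (a : ℝ) (ha : 0 ≤ a)
    (k : ℝ) (hk : k = 1 / (2 * γ ^ β) * ρ * (γ - ρ * α) ^ (β - 1) * ‖w‖ ^ (1 - β))
    (κ : ℝ) (hκ : κ = η * ‖w‖)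
    (U : ℝ → H) (hU : IsXPoly r U)
    (hUB : ∀ t ∈ Set.Icc a (a + k), ‖U t - w‖ ≤ κ)
    (hweak : ∀ V : ℝ → H, IsXPoly r V →
      (∫ t in a..(a + k), ⟪deriv U t, V t⟫) + ⟪U a - w, V a⟫ =
        ∫ t in a..(a + k), ⟪F t (U t), V t⟫) :
    ‖U (a + k)‖ ≤
      (1 + ρ * α * (ρ * γ ^ β + (γ - ρ * α) ^ β) /
        (2 * γ ^ β * (γ - ρ * α))) * ‖w‖ := by
  have hA : 0 < γ - ρ * α := by linarith [(lt_div_iff₀ hα).mp hργ]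
  have hW : 0 < ‖w‖ := hcF.trans_lt hw
  have hk0 : 0 ≤ k := by rw [hk]; positivity
  have hκw : κ ≤ ‖w‖ - c_F := calc
    κ ≤ (1 - c_F / ‖w‖) * ‖w‖ := by rw [hκ]; gcongr
    _ = ‖w‖ - c_F := by field_simp
  set M := γ * (‖w‖ + κ) ^ (β - 1) * κ + α * ‖w‖ ^ β with hM
  have hFU : ∀ t ∈ Icc a (a + k), ‖F t (U t)‖ ≤ M := by
    intro t ht
    have ht0 : 0 ≤ t := ha.trans ht.1
    have hcU : c_F ≤ ‖U t‖ := by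
      linarith [norm_sub_norm_le w (U t), norm_sub_rev w (U t), hUB t ht, hκw]
    exact norm_le_of_lipschitz_growth hγ.le hβ.le (hgrowth t ht0 w hw.le)
      (hLip t ht0 _ _ hcU hw.le) (hUB t ht)
  have hM0 : 0 ≤ M := (norm_nonneg _).trans (hFU a ⟨le_rfl, by linarith⟩)
  set z := U (a + k)
  have htest : ⟪z - w, z⟫ = ∫ t in a..(a + k), ⟪F t (U t), z⟫ := by
    rw [← hweak (fun _ => z) (isXPoly_const r z), integral_inner_deriv_eq hU.contDiff,
      ← inner_add_left, sub_add_sub_cancel]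
  have hz : ‖z‖ ≤ ‖w‖ + M * k := norm_le_add_of_inner_sub_le (mul_nonneg hM0 hk0) <| calc
    ⟪z - w, z⟫ ≤ M * ‖z‖ * (a + k - a) := htest ▸ integral_inner_le_of_norm_le (by linarith) hFU z
    _ = M * k * ‖z‖ := by ring
  have hMk : M * k = ρ * α * (ρ * γ ^ β + (γ - ρ * α) ^ β) / (2 * γ ^ β * (γ - ρ * α)) * ‖w‖ := by
    rw [hM, hk, hκ, hη]
    exact growthBound_mul_timeStep_eq hγ hA hW
  linarith

/-- One-step upper growth estimate (equation (geo3), Remark 5.3) for the dG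
scheme with the adaptive time step `k = (2γ^β)⁻¹ ρ (γ−ρα)^{β−1} ‖w‖^{1−β}`. -/
theorem dG_one_step_upper_growth
    {H : Type*} [NormedAddCommGroup H] [InnerProductSpace ℝ H]
    [FiniteDimensional ℝ H]
    (r : ℕ) (α γ β c_F : ℝ)
    (hα : 0 < α) (hγ : 0 < γ) (hβ : 1 < β) (hcF : 0 ≤ c_F)
    (F : ℝ → H → H) (hFcont : Continuous fun p : ℝ × H => F p.1 p.2)
    (hgrowth : ∀ t : ℝ, 0 ≤ t → ∀ x : H, c_F ≤ ‖x‖ → ‖F t x‖ ≤ α * ‖x‖ ^ β)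
    (hLip : ∀ t : ℝ, 0 ≤ t → ∀ x y : H, c_F ≤ ‖x‖ → c_F ≤ ‖y‖ →
      ‖F t x - F t y‖ ≤ γ * max ‖x‖ ‖y‖ ^ (β - 1) * ‖x - y‖)
    (w : H) (hw : c_F < ‖w‖)
    (ρ : ℝ) (hρ0 : 0 < ρ) (hργ : ρ < γ / α)
    (η : ℝ) (hη : η = ρ * α / (γ - ρ * α)) (hη1 : η ≤ 1 - c_F / ‖w‖)
    (a : ℝ) (ha : 0 ≤ a)
    (k : ℝ) (hk : k = 1 / (2 * γ ^ β) * ρ * (γ - ρ * α) ^ (β - 1) * ‖w‖ ^ (1 - β))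
    (κ : ℝ) (hκ : κ = η * ‖w‖)
    (U : ℝ → H) (hU : IsXPoly r U)
    (hUB : ∀ t ∈ Set.Icc a (a + k), ‖U t - w‖ ≤ κ)
    (hweak : ∀ V : ℝ → H, IsXPoly r V →
      (∫ t in a..(a + k), ⟪deriv U t, V t⟫) + ⟪U a - w, V a⟫ =
        ∫ t in a..(a + k), ⟪F t (U t), V t⟫) :
    ‖U (a + k)‖ ≤
      (1 + ρ * α * (ρ * γ ^ β + (γ - ρ * α) ^ β) /
        (2 * γ ^ β * (γ - ρ * α))) * ‖w‖ :=
  dG_one_step_upper_growth_general r α γ β c_F hα hγ hβ hcF F hgrowth hLip w hw ρ hρ0 hργ η hη hη1 a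
    ha k hk κ hκ U hU hUB hweak
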